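/- For any constants h > 0, ω > 0, B > 0 and any real Q, the superlevel set {(x, S) ∈ ℝ² : x > 0, S ≥ 0, and (B/2) · x · log₂(1 + (S·h)/(x·ω)) ≥ Q} is a convex subset of ℝ². -/

import Mathlib

/-!
The rate term is the perspective `x * g (S / x)` of the concave function
`g u = (B / 2) * log₂ (1 + (h / ω) * u)`. Perspectives of concave functions are concave, and
superlevel sets of concave functions are convex.
-/

open Real Set

lemma inv_smul_add_eq_add_smul_inv {E : Type*} [AddCommGroup E] [Module ℝ E]
    {x y a b : ℝ} (hx : x ≠ 0) (hy : y ≠ 0) (ht : a * x + b * y ≠ 0) (u v : E) :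
    (a * x + b * y)⁻¹ • (a • u + b • v) =
      (a * x / (a * x + b * y)) • (x⁻¹ • u) + (b * y / (a * x + b * y)) • (y⁻¹ • v) := by
  simp only [smul_add, smul_smul]
  congr 2 <;> field_simp

theorem ConcaveOn.perspective {E : Type*} [AddCommGroup E] [Module ℝ E] {s : Set E}
    {g : E → ℝ} (hg : ConcaveOn ℝ s g) :
    ConcaveOn ℝ {p : ℝ × E | 0 < p.1 ∧ p.1⁻¹ • p.2 ∈ s} fun p => p.1 * g (p.1⁻¹ • p.2) := by
  have key : ∀ ⦃p q : ℝ × E⦄, 0 < p.1 ∧ p.1⁻¹ • p.2 ∈ s → 0 < q.1 ∧ q.1⁻¹ • q.2 ∈ s →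
      ∀ ⦃a b : ℝ⦄, 0 ≤ a → 0 ≤ b → a + b = 1 →
      0 < a * p.1 + b * q.1 ∧
      (a * p.1 + b * q.1)⁻¹ • (a • p.2 + b • q.2) ∈ s ∧
      a * (p.1 * g (p.1⁻¹ • p.2)) + b * (q.1 * g (q.1⁻¹ • q.2)) ≤
        (a * p.1 + b * q.1) * g ((a * p.1 + b * q.1)⁻¹ • (a • p.2 + b • q.2)) := by
    rintro p q ⟨hp, hps⟩ ⟨hq, hqs⟩ a b ha hb hab
    have ht : 0 < a * p.1 + b * q.1 := convex_Ioi (0 : ℝ) hp hq ha hb hab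
    have hθ : a * p.1 / (a * p.1 + b * q.1) + b * q.1 / (a * p.1 + b * q.1) = 1 := by
      rw [← add_div, div_self ht.ne']
    rw [inv_smul_add_eq_add_smul_inv hp.ne' hq.ne' ht.ne']
    refine ⟨ht, hg.1 hps hqs (by positivity) (by positivity) hθ, ?_⟩
    calc a * (p.1 * g (p.1⁻¹ • p.2)) + b * (q.1 * g (q.1⁻¹ • q.2))
        = (a * p.1 + b * q.1) * ((a * p.1 / (a * p.1 + b * q.1)) • g (p.1⁻¹ • p.2) +
            (b * q.1 / (a * p.1 + b * q.1)) • g (q.1⁻¹ • q.2)) := by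
          simp only [smul_eq_mul]; field_simp
      _ ≤ _ := by
          gcongr
          exact hg.2 hps hqs (by positivity) (by positivity) hθ
  refine ⟨fun p hp q hq a b ha hb hab => ?_, fun p hp q hq a b ha hb hab => ?_⟩
  · obtain ⟨ht, hs, -⟩ := key hp hq ha hb hab
    exact ⟨ht, hs⟩
  · simpa only [smul_eq_mul, Prod.fst_add, Prod.snd_add, Prod.smul_fst, Prod.smul_snd]
      using (key hp hq ha hb hab).2.2

lemma concaveOn_log_one_add_mul {c : ℝ} (hc : 0 ≤ c) :
    ConcaveOn ℝ (Ici 0) fun u => log (1 + c * u) := by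
  refine ⟨convex_Ici 0, fun x hx y hy a b ha hb hab => ?_⟩
  have hpos : ∀ {u : ℝ}, u ∈ Ici 0 → 1 + c * u ∈ Ioi 0 := fun {u} hu =>
    show (0:ℝ) < 1 + c * u by have : 0 ≤ c * _ := mul_nonneg hc hu; linarith
  convert strictConcaveOn_log_Ioi.concaveOn.2 (hpos hx) (hpos hy) ha hb hab using 2
  simp only [smul_eq_mul]
  linear_combination hab.symm

/-- For constants h > 0, ω > 0, B > 0 and any real Q, the superlevel set
{(x, S) : x > 0, S ≥ 0, (B/2)·x·log₂(1 + S·h/(x·ω)) ≥ Q} is convex. -/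
theorem stmt_1 (h ω B Q : ℝ) (hh : 0 < h) (hω : 0 < ω) (hB : 0 < B) :
    Convex ℝ {p : ℝ × ℝ | 0 < p.1 ∧ 0 ≤ p.2 ∧
      Q ≤ B / 2 * p.1 * Real.logb 2 (1 + p.2 * h / (p.1 * ω))} := by
  have hrate : ConcaveOn ℝ (Ici 0) fun u => (B / 2 / log 2) • log (1 + h / ω * u) :=
    (concaveOn_log_one_add_mul (by positivity)).smul (by positivity)
  convert hrate.perspective.convex_ge Q using 1
  ext ⟨x, S⟩
  simp only [mem_ofPred_eq, mem_Ici, smul_eq_mul, and_assoc]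
  refine and_congr_right fun hx => and_congr (mul_nonneg_iff_of_pos_left (inv_pos.2 hx)).symm ?_
  rw [Real.logb]
  field_simp
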